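/- arXiv:1806.04653 — 4 statements merged into one kernel-verified Lean document; each statement's English description precedes it below -/
import Mathlib

section
/- Let G be a group, H a normal subgroup of G of index 2, g ∈ G with g ∉ H, A a commutative group, and ψ : H →* A a group homomorphism such that ψ(h) · ψ(g⁻¹ h g) = 1 for all h ∈ H (note g⁻¹ h g ∈ H since H is normal). Then the image of ker ψ under the inclusion H ≤ G is a normal subgroup of G. -/
/-- If `H` has index 2 in `G`, `g ∉ H`, and `ψ : H →* A` (with `A` commutative) satisfies
`ψ h * ψ (g⁻¹ h g) = 1` for all `h ∈ H`, then `ker ψ`, viewed as a subgroup of `G`,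
is normal in `G`. -/
theorem ker_normal_of_twist_eq_inv
    {G : Type*} [Group G] {A : Type*} [CommGroup A]
    (H : Subgroup G) (hidx : H.index = 2) (g : G) (hg : g ∉ H)
    (ψ : H →* A)
    (hψ : ∀ (h : H) (hmem : g⁻¹ * (h : G) * g ∈ H),
      ψ h * ψ ⟨g⁻¹ * (h : G) * g, hmem⟩ = 1) :
    (ψ.ker.map H.subtype).Normal := by
  have hconj : ∀ (y h : G), h ∈ H → y * h * y⁻¹ ∈ H := by
    intro y h hh
    by_cases hy : y ∈ H
    · exact H.mul_mem (H.mul_mem hy hh) (H.inv_mem hy)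
    · have h1 : h * y⁻¹ ∉ H := by
        intro hmem
        exact hy (by simpa using H.inv_mem ((Subgroup.mul_mem_iff_of_index_two hidx).mp hmem |>.mp hh))
      have : y * (h * y⁻¹) ∈ H :=
        (Subgroup.mul_mem_iff_of_index_two hidx).mpr (by tauto)
      simpa [mul_assoc] using this
  -- key: ψ of any conjugate of a kernel element is 1
  have key : ∀ (h : G) (hh : h ∈ H), ψ ⟨h, hh⟩ = 1 →
      ∀ (y : G) (hy : y * h * y⁻¹ ∈ H), ψ ⟨y * h * y⁻¹, hy⟩ = 1 := by
    intro h hh h1 y hy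
    by_cases hyH : y ∈ H
    · have e : (⟨y * h * y⁻¹, hy⟩ : H) = ⟨y, hyH⟩ * ⟨h, hh⟩ * (⟨y, hyH⟩)⁻¹ := by
        ext; simp
      rw [e, map_mul, map_mul, map_inv, h1, mul_one, mul_inv_cancel]
    · -- y ∉ H : write y = g * k with k = g⁻¹ * y ∈ H
      have hginv : g⁻¹ ∉ H := fun hmem => hg (by simpa using H.inv_mem hmem)
      have hk : g⁻¹ * y ∈ H := (Subgroup.mul_mem_iff_of_index_two hidx).mpr (by tauto)
      set k := g⁻¹ * y with hkdef
      have hy' : y = g * k := by rw [hkdef]; group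
      have hkhk : k * h * k⁻¹ ∈ H := hconj k h hh
      have hk1 : ψ ⟨k * h * k⁻¹, hkhk⟩ = 1 := by
        have e : (⟨k * h * k⁻¹, hkhk⟩ : H) = ⟨k, hk⟩ * ⟨h, hh⟩ * (⟨k, hk⟩)⁻¹ := by
          ext; simp
        rw [e, map_mul, map_mul, map_inv, h1, mul_one, mul_inv_cancel]
      -- now y * h * y⁻¹ = g * (k * h * k⁻¹) * g⁻¹
      have hghg : g * (k * h * k⁻¹) * g⁻¹ ∈ H := by
        rw [hy'] at hy; convert hy using 1; group
      have hback : g⁻¹ * (g * (k * h * k⁻¹) * g⁻¹) * g ∈ H := by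
        convert hkhk using 1; group
      have := hψ ⟨g * (k * h * k⁻¹) * g⁻¹, hghg⟩ hback
      have e2 : (⟨g⁻¹ * (g * (k * h * k⁻¹) * g⁻¹) * g, hback⟩ : H) = ⟨k * h * k⁻¹, hkhk⟩ := by
        ext; group
      rw [e2, hk1, mul_one] at this
      have e3 : (⟨y * h * y⁻¹, hy⟩ : H) = ⟨g * (k * h * k⁻¹) * g⁻¹, hghg⟩ := by
        ext; simp [hy']; group
      rw [e3, this]
  constructor
  intro x hx y
  rcases hx with ⟨⟨h, hh⟩, hker, rfl⟩
  simp only [Subgroup.coe_subtype] at *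
  exact ⟨⟨y * h * y⁻¹, hconj y h hh⟩, key h hh (by simpa [MonoidHom.mem_ker] using hker) y _,
    rfl⟩
end

section
/- Let M be a finite Galois extension of ℚ, let K be an intermediate field of M/ℚ with [K : ℚ] = 2, let H be the subgroup of Gal(M/ℚ) consisting of automorphisms fixing K pointwise, let σ₀ ∈ Gal(M/ℚ) with σ₀ ∉ H, let A be a commutative group, and let ψ : H →* A be a group homomorphism such that ψ(h) · ψ(σ₀⁻¹ h σ₀) = 1 for all h ∈ H (note σ₀⁻¹ h σ₀ ∈ H since H has index 2 and is hence normal). Then the fixed field of the image of ker ψ in Gal(M/ℚ) is a Galois extension of ℚ. -/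
/-!
Let `N = ker ψ ⊆ H`. Since `ψ (σ₀⁻¹ h σ₀) = (ψ h)⁻¹`, conjugation by `σ₀` preserves `N`; `N` is
also normalised by `H`, being a kernel there. As `H` has index 2, `H` and `σ₀ ∉ H` generate the
whole Galois group, so `N` is normal and its fixed field is Galois.
-/

open Subgroup

namespace Subgroup

variable {G : Type*} [Group G] {H : Subgroup G}

theorem eq_top_of_index_eq_two_of_le {K : Subgroup G} (hH : H.index = 2) (hle : H ≤ K) {g : G}
    (hgK : g ∈ K) (hgH : g ∉ H) : K = ⊤ := by
  refine (eq_top_iff' K).mpr fun x => ?_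
  by_cases hx : x ∈ H
  · exact hle hx
  · have hgx : g⁻¹ * x ∈ H := by
      rw [mul_mem_iff_of_index_two hH, inv_mem_iff]
      tauto
    simpa using K.mul_mem hgK (hle hgx)

theorem le_normalizer_map_subtype (N : Subgroup H) [N.Normal] :
    H ≤ normalizer (N.map H.subtype : Set G) := fun h hh => by
  simpa using le_normalizer_map H.subtype
    (mem_map_of_mem _ (show ⟨h, hh⟩ ∈ normalizer (N : Set H) by simp [normalizer_eq_top]))

variable {A : Type*} [CommGroup A]

theorem mem_normalizer_map_ker_of_mul_twist_eq_one [hH : H.Normal] (ψ : H →* A) {g : G}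
    (hψ : ∀ (h : H) (hmem : g⁻¹ * h * g ∈ H), ψ h * ψ ⟨g⁻¹ * h * g, hmem⟩ = 1) :
    g ∈ normalizer (ψ.ker.map H.subtype : Set G) := by
  have hconj (x : G) : g⁻¹ * x * g ∈ H ↔ x ∈ H := by
    rw [hH.mem_comm_iff, mul_inv_cancel_left]
  refine mem_normalizer_iff''.mpr fun x => ?_
  simp only [mem_map, MonoidHom.mem_ker, coe_subtype, Subtype.exists, exists_and_right,
    exists_eq_right]
  constructor
  · rintro ⟨hx, hψx⟩
    exact ⟨(hconj x).2 hx, by simpa [hψx] using hψ ⟨x, hx⟩ ((hconj x).2 hx)⟩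
  · rintro ⟨hx, hψx⟩
    have hx' := (hconj x).1 hx
    exact ⟨hx', by simpa [hψx] using hψ ⟨x, hx'⟩ hx⟩

theorem normal_map_ker_of_mul_twist_eq_one (hH : H.index = 2) (ψ : H →* A) {g : G}
    (hgH : g ∉ H)
    (hψ : ∀ (h : H) (hmem : g⁻¹ * h * g ∈ H), ψ h * ψ ⟨g⁻¹ * h * g, hmem⟩ = 1) :
    (ψ.ker.map H.subtype).Normal := by
  have := normal_of_index_eq_two hH
  exact normalizer_eq_top_iff.mp <| eq_top_of_index_eq_two_of_le hH
    (le_normalizer_map_subtype ψ.ker) (mem_normalizer_map_ker_of_mul_twist_eq_one ψ hψ) hgH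

end Subgroup

theorem fixedField_ker_isGalois_of_twist_eq_inv_general
    (M : Type*) [Field M] [Algebra ℚ M] [IsGalois ℚ M]
    (K : IntermediateField ℚ M) (hK : Module.finrank ℚ K = 2)
    (σ₀ : M ≃ₐ[ℚ] M) (hσ₀ : σ₀ ∉ K.fixingSubgroup)
    (A : Type*) [CommGroup A] (ψ : K.fixingSubgroup →* A)
    (hψ : ∀ (h : K.fixingSubgroup)
        (hmem : σ₀⁻¹ * (h : M ≃ₐ[ℚ] M) * σ₀ ∈ K.fixingSubgroup),
      ψ h * ψ ⟨σ₀⁻¹ * (h : M ≃ₐ[ℚ] M) * σ₀, hmem⟩ = 1) :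
    IsGalois ℚ (IntermediateField.fixedField (ψ.ker.map K.fixingSubgroup.subtype)) := by
  have hindex : K.fixingSubgroup.index = 2 := by
    rw [← IntermediateField.finrank_eq_fixingSubgroup_index, hK]
  have := normal_map_ker_of_mul_twist_eq_one hindex ψ hσ₀ hψ
  -- The statement's `ℚ`-algebra structure on the fixed field is `DivisionRing.toRatAlgebra`, not
  -- the one inherited from `M`; the two agree since `ℚ`-algebra structures are unique.
  convert IsGalois.of_fixedField_normal_subgroup (ψ.ker.map K.fixingSubgroup.subtype) using 2
  exact Subsingleton.elim _ _

/-- Let `M/ℚ` be a finite Galois extension, `K` an intermediate field of degree 2 over `ℚ`,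
`H = Gal(M/K)` the fixing subgroup of `K`, `σ₀ ∈ Gal(M/ℚ) \ H`, and `ψ : H →* A` a
homomorphism to a commutative group with `ψ h * ψ (σ₀⁻¹ h σ₀) = 1` for all `h ∈ H`.
Then the fixed field of `ker ψ` is Galois over `ℚ`. -/
theorem fixedField_ker_isGalois_of_twist_eq_inv
    (M : Type*) [Field M] [Algebra ℚ M] [FiniteDimensional ℚ M] [IsGalois ℚ M]
    (K : IntermediateField ℚ M) (hK : Module.finrank ℚ K = 2)
    (σ₀ : M ≃ₐ[ℚ] M) (hσ₀ : σ₀ ∉ K.fixingSubgroup)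
    (A : Type*) [CommGroup A] (ψ : K.fixingSubgroup →* A)
    (hψ : ∀ (h : K.fixingSubgroup)
        (hmem : σ₀⁻¹ * (h : M ≃ₐ[ℚ] M) * σ₀ ∈ K.fixingSubgroup),
      ψ h * ψ ⟨σ₀⁻¹ * (h : M ≃ₐ[ℚ] M) * σ₀, hmem⟩ = 1) :
    IsGalois ℚ (IntermediateField.fixedField (ψ.ker.map K.fixingSubgroup.subtype)) :=
  fixedField_ker_isGalois_of_twist_eq_inv_general M K hK σ₀ hσ₀ A ψ hψ
end

section
/- Let G be a group, H a subgroup of G of index 2, A a commutative group, ψ : H →* A a group homomorphism, and g ∈ G with g ∉ H. Then for every x ∈ H, the transfer homomorphism Ver : G →* A associated to ψ satisfies Ver(x) = ψ(x) · ψ(g⁻¹ x g) (note g⁻¹ x g ∈ H since a subgroup of index 2 is normal). -/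
/-!
A subgroup of index 2 is normal, so `x ∈ H` fixes every left coset. Computing the transfer with
the transversal `{1, g}`, the coset of each representative `t` then contributes `ψ (t⁻¹ x t)`.
-/

section

open Subgroup Subgroup.leftTransversals
open scoped Pointwise

variable {G : Type*} [Group G] {H : Subgroup G} {A : Type*} [CommGroup A] (ϕ : H →* A)

theorem Subgroup.leftTransversals.diff_range_eq_prod [H.FiniteIndex] [Fintype (G ⧸ H)]
    {f₁ f₂ : G ⧸ H → G} (hf₁ : ∀ q, ↑(f₁ q) = q) (hf₂ : ∀ q, ↑(f₂ q) = q) :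
    diff ϕ ⟨Set.range f₁, isComplement_range_left hf₁⟩
        ⟨Set.range f₂, isComplement_range_left hf₂⟩ =
      ∏ q, ϕ ⟨(f₁ q)⁻¹ * f₂ q, QuotientGroup.eq.mp ((hf₁ q).trans (hf₂ q).symm)⟩ := by
  simp only [diff, IsComplement.leftQuotientEquiv_apply hf₁,
    IsComplement.leftQuotientEquiv_apply hf₂]
  congr
  exact Subsingleton.elim _ _

theorem MonoidHom.transfer_eq_prod_of_conj_mem [H.FiniteIndex] [Fintype (G ⧸ H)]
    {f : G ⧸ H → G} (hf : ∀ q, ↑(f q) = q) {x : G} (hx : ∀ q, (f q)⁻¹ * x * f q ∈ H) :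
    ϕ.transfer x = ∏ q, ϕ ⟨(f q)⁻¹ * x * f q, hx q⟩ := by
  have hxf : ∀ q, ↑(x * f q) = q := fun q =>
    (QuotientGroup.eq.mpr (by rw [← mul_assoc]; exact hx q)).symm.trans (hf q)
  have hsmul : x • (⟨_, isComplement_range_left hf⟩ : H.LeftTransversal) =
      ⟨_, isComplement_range_left hxf⟩ :=
    Subtype.ext (Set.smul_set_range x f)
  rw [ϕ.transfer_def ⟨_, isComplement_range_left hf⟩, hsmul, diff_range_eq_prod ϕ hf hxf]
  simp only [mul_assoc]

theorem QuotientGroup.eq_mk_one_or_eq_mk_of_index_eq_two (hidx : H.index = 2) {g : G}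
    (hg : g ∉ H) (q : G ⧸ H) : q = ((1 : G) : G ⧸ H) ∨ q = (g : G ⧸ H) := by
  induction q using QuotientGroup.induction_on with | H b => ?_
  simp only [QuotientGroup.eq, mul_mem_iff_of_index_two hidx, inv_mem_iff, one_mem, hg, iff_true,
    iff_false]
  exact em _

end

/-- Index-2 transfer formula on `H`: for `H ≤ G` of index 2, `g ∉ H`, `ψ : H →* A` with `A`
commutative, and `x ∈ H`, the transfer satisfies `Ver(x) = ψ(x) * ψ(g⁻¹ x g)`. -/
theorem transfer_eq_of_index_two_mem
    {G : Type*} [Group G] {A : Type*} [CommGroup A]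
    (H : Subgroup G) [H.FiniteIndex] (hidx : H.index = 2)
    (g : G) (hg : g ∉ H) (ψ : H →* A) :
    ∀ (x : H) (hmem : g⁻¹ * (x : G) * g ∈ H),
      ψ.transfer (x : G) = ψ x * ψ ⟨g⁻¹ * (x : G) * g, hmem⟩ := by
  intro x hmem
  classical
  let := H.fintypeQuotientOfFiniteIndex
  have hne : ((1 : G) : G ⧸ H) ≠ g := fun h => hg (by simpa using QuotientGroup.eq.mp h)
  let f : G ⧸ H → G := fun q => if q = ((1 : G) : G ⧸ H) then 1 else g
  have hf : ∀ q, ↑(f q) = q := fun q => by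
    rcases QuotientGroup.eq_mk_one_or_eq_mk_of_index_eq_two hidx hg q with rfl | rfl <;>
      simp [f, hne.symm]
  have hconj : ∀ q, (f q)⁻¹ * x * f q ∈ H := fun q =>
    (Subgroup.normal_of_index_eq_two hidx).conj_mem' _ x.2 _
  rw [ψ.transfer_eq_prod_of_conj_mem hf hconj, Fintype.prod_eq_mul _ _ hne]
  · simp [f, hne.symm]
  · intro q ⟨h1, hg'⟩
    exact ((QuotientGroup.eq_mk_one_or_eq_mk_of_index_eq_two hidx hg q).elim h1 hg').elim
end

section
/- Let G be a group, H a subgroup of G of index 2, A a commutative group, ψ : H →* A a group homomorphism, and x ∈ G with x ∉ H. Then the transfer homomorphism Ver : G →* A associated to ψ satisfies Ver(x) = ψ(x²) (note x² ∈ H since H has index 2). -/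
/-!
Since `H` has index 2 it is normal, and `x ∉ H` acts on the two cosets `G ⧸ H` without fixed
points while `x²` acts trivially. So `⟨x⟩` has a single orbit, of length 2, and the orbit
formula for the transfer reduces to the single factor `ψ(g⁻¹ x² g)`. Every `g` lies in `H` or in
`xH`, and conjugating `x²` by `h` or by `xh` (with `h ∈ H`) does not change its `ψ`-value, since
`A` is commutative and `x` commutes with `x²`.
-/

namespace QuotientGroup

variable {G : Type*} [Group G] (N : Subgroup G) [N.Normal]

theorem smul_eq_self_iff {g : G} {q : G ⧸ N} : g • q = q ↔ g ∈ N := by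
  induction q using QuotientGroup.induction_on with
  | H a =>
    change ((g * a : G) : G ⧸ N) = a ↔ g ∈ N
    rw [QuotientGroup.mk_mul, mul_eq_right, QuotientGroup.eq_one_iff]

theorem minimalPeriod_smul_eq_prime {p : ℕ} [Fact p.Prime] {g : G} (hp : g ^ p ∈ N) (hg : g ∉ N)
    (q : G ⧸ N) : Function.minimalPeriod (g • ·) q = p := by
  refine Function.minimalPeriod_eq_prime_iff.mpr ⟨?_, (smul_eq_self_iff N).not.mpr hg⟩
  rw [Function.IsPeriodicPt, Function.IsFixedPt, smul_iterate_apply, smul_eq_self_iff N]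
  exact hp

end QuotientGroup

namespace MonoidHom

variable {G A : Type*} [Group G] [CommGroup A] {H : Subgroup G} (ψ : H →* A)

theorem map_conj_of_mem {a k : G} (ha : a ∈ H) (hk : k ∈ H) (h : a⁻¹ * k * a ∈ H) :
    ψ ⟨a⁻¹ * k * a, h⟩ = ψ ⟨k, hk⟩ := by
  have : (⟨a⁻¹ * k * a, h⟩ : H) = (⟨a, ha⟩ : H)⁻¹ * ⟨k, hk⟩ * ⟨a, ha⟩ := rfl
  rw [this, map_mul, map_mul, map_inv, mul_comm, mul_inv_cancel_left]

theorem map_conj_of_commute {y k g : G} (hyk : Commute y k) (hg : y⁻¹ * g ∈ H) (hk : k ∈ H)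
    (h : g⁻¹ * k * g ∈ H) : ψ ⟨g⁻¹ * k * g, h⟩ = ψ ⟨k, hk⟩ := by
  have hconj : g⁻¹ * k * g = (y⁻¹ * g)⁻¹ * k * (y⁻¹ * g) := by
    rw [mul_inv_rev, inv_inv, mul_assoc g⁻¹ y, hyk.eq]; group
  simp only [hconj] at h ⊢
  exact ψ.map_conj_of_mem hg hk h

end MonoidHom

namespace Subgroup

variable {G : Type*} [Group G] {H : Subgroup G} {x : G}

theorem map_conj_pow_of_index_two {A : Type*} [CommGroup A] (ψ : H →* A) (hidx : H.index = 2)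
    (hx : x ∉ H) {n : ℕ} (hn : x ^ n ∈ H) (g : G) (h : g⁻¹ * x ^ n * g ∈ H) :
    ψ ⟨g⁻¹ * x ^ n * g, h⟩ = ψ ⟨x ^ n, hn⟩ := by
  by_cases hg : g ∈ H
  · exact ψ.map_conj_of_mem hg hn h
  · have hxg : x⁻¹ * g ∈ H := by
      rw [mul_mem_iff_of_index_two hidx, inv_mem_iff]
      exact iff_of_false hx hg
    exact ψ.map_conj_of_commute (Commute.self_pow x n) hxg hn h

theorem subsingleton_orbitRel_zpowers_of_index_two (hidx : H.index = 2) (hx : x ∉ H) :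
    Subsingleton (Quotient (MulAction.orbitRel (zpowers x) (G ⧸ H))) := by
  have : H.Normal := normal_of_index_eq_two hidx
  have : H.FiniteIndex := ⟨by omega⟩
  let : Fintype (Quotient (MulAction.orbitRel (zpowers x) (G ⧸ H))) := Fintype.ofFinite _
  have hcard := index_eq_sum_minimalPeriod H x
  simp only [QuotientGroup.minimalPeriod_smul_eq_prime H (sq_mem_of_index_two hidx x) hx,
    Finset.sum_const, Finset.card_univ, smul_eq_mul, hidx] at hcard
  exact Fintype.card_le_one_iff_subsingleton.mp (by omega)

end Subgroup

/-- Index-2 transfer formula off `H`: for `H ≤ G` of index 2, `ψ : H →* A` with `A`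
commutative, and `x ∉ H`, the transfer satisfies `Ver(x) = ψ(x²)`. -/
theorem transfer_eq_of_index_two_not_mem
    {G : Type*} [Group G] {A : Type*} [CommGroup A]
    (H : Subgroup G) [H.FiniteIndex] (hidx : H.index = 2)
    (x : G) (hx : x ∉ H) (ψ : H →* A) :
    ∀ hmem : x ^ 2 ∈ H, ψ.transfer x = ψ ⟨x ^ 2, hmem⟩ := by
  intro hmem
  have : H.Normal := H.normal_of_index_eq_two hidx
  have := H.subsingleton_orbitRel_zpowers_of_index_two hidx hx
  let : Fintype (Quotient (MulAction.orbitRel (Subgroup.zpowers x) (G ⧸ H))) := Fintype.ofFinite _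
  rw [ψ.transfer_eq_prod_quotient_orbitRel_zpowers_quot,
    Fintype.prod_subsingleton _ (Quotient.mk'' 1)]
  simp only [QuotientGroup.minimalPeriod_smul_eq_prime H hmem hx]
  exact H.map_conj_pow_of_index_two ψ hidx hx hmem _ _
end
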